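/- Translating the factor of a combinatorial mutation yields an isomorphic (in fact lattice-translate-related) result: for any lattice point v with ⟨w,v⟩ = 0, one has mut_w(P, v + F; {G_h + hv}) = mut_w(P, F; {G_h}) up to a GL_n(ℤ) transformation fixing w; more precisely the two polytopes are related by the shear x ↦ x + ⟨w,x⟩v. -/
import Mathlib


open Set Pointwise

noncomputable section

def pairing {n : ℕ} (w : Fin n → ℤ) (x : Fin n → ℚ) : ℚ :=
  ∑ i, (w i : ℚ) * x i

def IsLatticePt {n : ℕ} (x : Fin n → ℚ) : Prop := ∀ i, ∃ z : ℤ, x i = (z : ℚ)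

def IsLatticePolytope {n : ℕ} (P : Set (Fin n → ℚ)) : Prop :=
  ∃ S : Finset (Fin n → ℚ), (∀ x ∈ S, IsLatticePt x) ∧ P = convexHull ℚ (S : Set (Fin n → ℚ))

def IsPrimitive {n : ℕ} (w : Fin n → ℤ) : Prop := Finset.univ.gcd w = 1

def wSlice {n : ℕ} (w : Fin n → ℤ) (h : ℤ) (P : Set (Fin n → ℚ)) : Set (Fin n → ℚ) :=
  convexHull ℚ {x | x ∈ P ∧ IsLatticePt x ∧ pairing w x = (h : ℚ)}

def mutation {n : ℕ} (w : Fin n → ℤ) (P F : Set (Fin n → ℚ)) (G : ℤ → Set (Fin n → ℚ)) :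
    Set (Fin n → ℚ) :=
  convexHull ℚ ((⋃ h : ℤ, ⋃ _ : h < 0, G h) ∪
    ⋃ h : ℤ, ⋃ _ : 0 ≤ h, (wSlice w h P + (h : ℚ) • F))

def IsMutData {n : ℕ} (w : Fin n → ℤ) (P F : Set (Fin n → ℚ))
    (G : ℤ → Set (Fin n → ℚ)) : Prop :=
  IsLatticePolytope F ∧ F.Nonempty ∧ (∀ x ∈ F, pairing w x = 0) ∧
  ∀ h : ℤ, h < 0 →
    (G h = ∅ ∨ IsLatticePolytope (G h)) ∧
    {v | v ∈ P.extremePoints ℚ ∧ pairing w v = (h : ℚ)} ⊆ G h + (-(h : ℚ)) • F ∧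
    G h + (-(h : ℚ)) • F ⊆ wSlice w h P

def dpair {n : ℕ} (u v : Fin n → ℚ) : ℚ := ∑ i, u i * v i

def dualP {n : ℕ} (P : Set (Fin n → ℚ)) : Set (Fin n → ℚ) := {u | ∀ v ∈ P, -1 ≤ dpair u v}

namespace MutTransAux

variable {n : ℕ}

lemma pairing_add (w : Fin n → ℤ) (x y : Fin n → ℚ) :
    pairing w (x + y) = pairing w x + pairing w y := by
  simp [pairing, mul_add, Finset.sum_add_distrib]

lemma pairing_smul (w : Fin n → ℤ) (c : ℚ) (x : Fin n → ℚ) :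
    pairing w (c • x) = c * pairing w x := by
  simp [pairing, Finset.mul_sum, mul_left_comm]

lemma isLinear_pairing (w : Fin n → ℤ) : IsLinearMap ℚ (pairing w) :=
  ⟨pairing_add w, fun c x => by rw [pairing_smul, smul_eq_mul]⟩

lemma pairing_of_mem_wSlice {w : Fin n → ℤ} {h : ℤ} {P : Set (Fin n → ℚ)}
    {x : Fin n → ℚ} (hx : x ∈ wSlice w h P) : pairing w x = (h : ℚ) :=
  convexHull_min (fun y hy => hy.2.2) (convex_hyperplane (isLinear_pairing w) (h : ℚ)) hx

lemma latticePt_add {x y : Fin n → ℚ} (hx : IsLatticePt x) (hy : IsLatticePt y) :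
    IsLatticePt (x + y) := by
  intro i
  obtain ⟨a, ha⟩ := hx i
  obtain ⟨b, hb⟩ := hy i
  exact ⟨a + b, by simp [ha, hb]⟩

lemma latticePt_zsmul {v : Fin n → ℚ} (hv : IsLatticePt v) (h : ℤ) :
    IsLatticePt ((h : ℚ) • v) := by
  intro i
  obtain ⟨a, ha⟩ := hv i
  exact ⟨h * a, by simp [ha]⟩

lemma convexHull_translate (c : Fin n → ℚ) (s : Set (Fin n → ℚ)) :
    (c + ·) '' convexHull ℚ s = convexHull ℚ ((c + ·) '' s) := by
  have h1 : (c + ·) '' convexHull ℚ s = c +ᵥ convexHull ℚ s := by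
    rw [← Set.image_vadd]; rfl
  have h2 : (c + ·) '' s = c +ᵥ s := by rw [← Set.image_vadd]; rfl
  rw [h1, h2, convexHull_vadd]

lemma latticePolytope_translate {F : Set (Fin n → ℚ)} (c : Fin n → ℚ)
    (hc : IsLatticePt c) (hF : IsLatticePolytope F) : IsLatticePolytope ((c + ·) '' F) := by
  obtain ⟨S, hS, rfl⟩ := hF
  refine ⟨S.image (c + ·), ?_, ?_⟩
  · intro x hx
    obtain ⟨y, hy, rfl⟩ := Finset.mem_image.1 hx
    exact latticePt_add hc (hS y hy)
  · rw [Finset.coe_image, convexHull_translate]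

lemma image_right_eq_left (c : Fin n → ℚ) (s : Set (Fin n → ℚ)) :
    (· + c) '' s = (c + ·) '' s :=
  Set.image_congr fun x _ => add_comm x c

/-- Key: `(G + c•v) + (-c)•(v + F) = G + (-c)•F`. -/
lemma translate_add_smul (A B : Set (Fin n → ℚ)) (c : ℚ) (v : Fin n → ℚ) :
    ((· + c • v) '' A) + (-c) • ((v + ·) '' B) = A + (-c) • B := by
  ext x
  constructor
  · rintro ⟨_, ⟨a, ha, rfl⟩, _, ⟨_, ⟨b, hb, rfl⟩, rfl⟩, rfl⟩
    refine ⟨a, ha, (-c) • b, ⟨b, hb, rfl⟩, ?_⟩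
    module
  · rintro ⟨a, ha, _, ⟨b, hb, rfl⟩, rfl⟩
    refine ⟨a + c • v, ⟨a, ha, rfl⟩, (-c) • (v + b), ⟨v + b, ⟨b, hb, rfl⟩, rfl⟩, ?_⟩
    module

lemma translate_smul_add (A B : Set (Fin n → ℚ)) (c : ℚ) (v : Fin n → ℚ) :
    (· + c • v) '' (A + c • B) = A + c • ((v + ·) '' B) := by
  ext x
  constructor
  · rintro ⟨_, ⟨a, ha, _, ⟨b, hb, rfl⟩, rfl⟩, rfl⟩
    refine ⟨a, ha, c • (v + b), ⟨v + b, ⟨b, hb, rfl⟩, rfl⟩, ?_⟩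
    module
  · rintro ⟨a, ha, _, ⟨_, ⟨b, hb, rfl⟩, rfl⟩, rfl⟩
    refine ⟨a + c • b, ⟨a, ha, c • b, ⟨b, hb, rfl⟩, rfl⟩, ?_⟩
    module

/-- The shear as a linear map. -/
def shear (w : Fin n → ℤ) (v : Fin n → ℚ) : (Fin n → ℚ) →ₗ[ℚ] (Fin n → ℚ) where
  toFun x := x + pairing w x • v
  map_add' x y := by simp only [pairing_add]; module
  map_smul' c x := by simp only [pairing_smul, RingHom.id_apply]; module

lemma pairing_of_mem_G {w : Fin n → ℤ} {P F : Set (Fin n → ℚ)} {G : ℤ → Set (Fin n → ℚ)}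
    (hdata : IsMutData w P F G) {h : ℤ} (hh : h < 0) {g : Fin n → ℚ} (hg : g ∈ G h) :
    pairing w g = (h : ℚ) := by
  obtain ⟨f, hf⟩ := hdata.2.1
  have hmem : g + (-(h : ℚ)) • f ∈ wSlice w h P :=
    (hdata.2.2.2 h hh).2.2 (Set.add_mem_add hg (Set.smul_mem_smul_set hf))
  have hp := pairing_of_mem_wSlice hmem
  rw [pairing_add, pairing_smul, hdata.2.2.1 f hf] at hp
  linarith

end MutTransAux

open MutTransAux in
/-- Translating the factor of a combinatorial mutation by a lattice point `v` with
`⟨w,v⟩ = 0` yields the image of the original mutation under the shear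
`x ↦ x + ⟨w,x⟩ • v`, a `GL_n(ℤ)` transformation fixing `w`. -/
theorem mutation_translate_factor {n : ℕ} (w : Fin n → ℤ) (P F : Set (Fin n → ℚ))
    (G : ℤ → Set (Fin n → ℚ)) (hP : IsLatticePolytope P) (hw : IsPrimitive w)
    (hdata : IsMutData w P F G) (v : Fin n → ℚ) (hv : IsLatticePt v)
    (hv0 : pairing w v = 0) :
    IsMutData w P ((v + ·) '' F) (fun h => ((· + (h : ℚ) • v)) '' G h) ∧
      mutation w P ((v + ·) '' F) (fun h => ((· + (h : ℚ) • v)) '' G h) =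
        (fun x => x + pairing w x • v) '' mutation w P F G := by
  obtain ⟨hFlat, hFne, hF0, hG⟩ := hdata
  have hdata' : IsMutData w P F G := ⟨hFlat, hFne, hF0, hG⟩
  constructor
  · refine ⟨latticePolytope_translate v hv hFlat, hFne.image _, ?_, ?_⟩
    · rintro x ⟨f, hf, rfl⟩
      rw [pairing_add, hv0, hF0 f hf, add_zero]
    · intro h hh
      refine ⟨?_, ?_, ?_⟩
      · rcases (hG h hh).1 with hE | hL
        · left; simp [hE]
        · right
          show IsLatticePolytope ((· + (h : ℚ) • v) '' G h)
          rw [image_right_eq_left]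
          exact latticePolytope_translate _ (latticePt_zsmul hv h) hL
      · simp only [translate_add_smul]
        exact (hG h hh).2.1
      · simp only [translate_add_smul]
        exact (hG h hh).2.2
  · rw [mutation, mutation,
      show (fun x => x + pairing w x • v) = ⇑(shear w v) from rfl,
      LinearMap.image_convexHull]
    congr 1
    symm
    rw [Set.image_union]
    congr 1
    · rw [Set.image_iUnion]
      refine Set.iUnion_congr fun h => ?_
      rw [Set.image_iUnion]
      refine Set.iUnion_congr fun hh => ?_
      refine Set.image_congr fun g hg => ?_
      show g + pairing w g • v = g + (h : ℚ) • v
      rw [pairing_of_mem_G hdata' hh hg]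
    · rw [Set.image_iUnion]
      refine Set.iUnion_congr fun h => ?_
      rw [Set.image_iUnion]
      refine Set.iUnion_congr fun hh => ?_
      have step1 : ⇑(shear w v) '' (wSlice w h P + (h : ℚ) • F)
          = (· + (h : ℚ) • v) '' (wSlice w h P + (h : ℚ) • F) := by
        refine Set.image_congr fun x hx => ?_
        obtain ⟨s, hs, z, ⟨f, hf, rfl⟩, rfl⟩ := hx
        show (s + (h : ℚ) • f) + pairing w (s + (h : ℚ) • f) • v
            = (s + (h : ℚ) • f) + (h : ℚ) • v
        rw [pairing_add, pairing_smul, pairing_of_mem_wSlice hs, hF0 f hf, mul_zero, add_zero]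
      rw [step1, translate_smul_add]
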